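/- arXiv:1909.11724 — 2 statements merged into one kernel-verified Lean document; each statement's English description precedes it below -/
import Mathlib

section
/- Let C be a category with finite products, equipped with its Cartesian monoidal structure, and let X be an object of C regarded as a comonoid object via the diagonal comultiplication X → X × X and the counit given by the unique map to the terminal object. Then the category of (left) comodule objects over this comonoid in C — defined as the opposite of the category of module objects over X (with its codiagonal monoid structure) in the opposite category Cᵒᵖ with its coCartesian monoidal structure — is equivalent to the slice category C/X of objects of C over X; the equivalence sends a comodule (M, c : M → X × M) to the object M equipped with the structure morphism M → X obtained by composing the coaction c with the projection X × M → X. -/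
/-!
In a category with finite coproducts the monoidal unit is initial, so a monoid `M` has a unique
unit, and the unit laws force the multiplication to be the codiagonal. Likewise the unit law of
an action `γ : M ⨿ N ⟶ N` says that `γ` restricts to the identity on `N`, so `γ` is determined by
its restriction `M ⟶ N`; conversely every morphism `f : M ⟶ N` gives the action
`coprod.desc f (𝟙 N)`, whose associativity holds because the multiplication is the codiagonal.
Hence `M`-modules are the objects under `M`. Applied in `Cᵒᵖ`, comodules over `X` are the
objects over `X`.
-/

open CategoryTheory CategoryTheory.Limits CategoryTheory.MonoidalCategory

attribute [local instance] CategoryTheory.monoidalOfHasFiniteCoproducts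

universe v u

open scoped MonObj ModObj MonoidalLeftAction

namespace CategoryTheory

section CoCartesian

variable {D : Type u} [Category.{v} D] [HasFiniteCoproducts D]

attribute [local simp] coprod.inl_desc coprod.inr_desc

-- Laws about morphisms out of `M ⊗ N` are first restated on `M ⨿ N` (via `have … :=` or `show`):
-- the `coprod` simp lemmas do not see through `⊗`.

theorem MonObj.mul_eq_codiag (M : D) [MonObj M] : μ[M] = codiag M := by
  have mul_one : coprod.map (𝟙 M) η ≫ μ = coprod.desc (𝟙 M) (initial.to M) := MonObj.mul_one M
  have one_mul : coprod.map η (𝟙 M) ≫ μ = coprod.desc (initial.to M) (𝟙 M) := MonObj.one_mul M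
  apply coprod.hom_ext
  · simpa [codiag] using coprod.inl ≫= mul_one
  · simpa [codiag] using coprod.inr ≫= one_mul

theorem ModObj.inr_smul (M N : D) [MonObj M] [ModObj M N] : coprod.inr ≫ γ[M, N] = 𝟙 N := by
  have one_smul : coprod.map η (𝟙 N) ≫ γ[M, N] = coprod.desc (initial.to N) (𝟙 N) :=
    ModObj.one_smul_self M N
  simpa using coprod.inr ≫= one_smul

theorem ModObj.smul_eq_desc (M N : D) [MonObj M] [ModObj M N] :
    γ[M, N] = coprod.desc (coprod.inl ≫ γ[M, N]) (𝟙 N) := by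
  apply coprod.hom_ext
  · simp
  · simp [ModObj.inr_smul]

noncomputable abbrev ModObj.ofHom {M N : D} [MonObj M] (f : M ⟶ N) : ModObj M N where
  smul := coprod.desc f (𝟙 N)
  one_smul := by
    show coprod.map η (𝟙 N) ≫ coprod.desc f (𝟙 N) = coprod.desc (initial.to N) (𝟙 N)
    apply coprod.hom_ext
    · exact initial.hom_ext _ _
    · simp
  mul_smul := by
    show coprod.map μ (𝟙 N) ≫ coprod.desc f (𝟙 N) =
      (coprod.associator M M N).hom ≫ coprod.map (𝟙 M) (coprod.desc f (𝟙 N)) ≫ coprod.desc f (𝟙 N)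
    rw [MonObj.mul_eq_codiag]
    ext <;> simp [coprod.associator, codiag]

namespace Mod

variable (M : D) [MonObj M]

noncomputable def toUnder : Mod D M ⥤ Under M where
  obj N := Under.mk (coprod.inl ≫ γ[M, N.X])
  map φ := Under.homMk φ.hom (by simp)

noncomputable def ofUnder : Under M ⥤ Mod D M where
  obj f := { X := f.right, mod := ModObj.ofHom f.hom }
  map {f f'} g := Mod.Hom.mk' g.right (by
    show coprod.desc f.hom (𝟙 _) ≫ g.right = coprod.map (𝟙 M) g.right ≫ coprod.desc f'.hom (𝟙 _)
    apply coprod.hom_ext <;> simp)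

noncomputable def equivUnder : Mod D M ≌ Under M :=
  .mk (toUnder M) (ofUnder M)
    (NatIso.ofComponents (fun (N : Mod D M) =>
      { hom := Mod.Hom.mk' (𝟙 N.X) (by
          show γ[M, N.X] ≫ 𝟙 N.X =
            coprod.map (𝟙 M) (𝟙 N.X) ≫ coprod.desc (coprod.inl ≫ γ[M, N.X]) (𝟙 N.X)
          simpa using ModObj.smul_eq_desc M N.X)
        inv := Mod.Hom.mk' (𝟙 N.X) (by
          show coprod.desc (coprod.inl ≫ γ[M, N.X]) (𝟙 N.X) ≫ 𝟙 N.X =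
            coprod.map (𝟙 M) (𝟙 N.X) ≫ γ[M, N.X]
          simpa using (ModObj.smul_eq_desc M N.X).symm)
        hom_inv_id := by ext; exact Category.id_comp _
        inv_hom_id := by ext; exact Category.id_comp _ })
      fun _ => by ext; exact (Category.comp_id _).trans (Category.id_comp _).symm)
    (NatIso.ofComponents
      (fun f => Under.isoMk (Iso.refl f.right)
        (by exact (Category.comp_id _).trans (coprod.inl_desc _ _)))
      fun _ => by ext; exact (Category.comp_id _).trans (Category.id_comp _).symm)

end Mod

end CoCartesian

noncomputable def Mod.opEquivOver {C : Type u} [Category.{v} C] [HasFiniteProducts C]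
    (M : Cᵒᵖ) [MonObj M] : (Mod Cᵒᵖ M)ᵒᵖ ≌ Over M.unop :=
  (equivUnder M).op.trans ((Under.opEquivOpOver M.unop).op.trans (opOpEquivalence _))

end CategoryTheory

theorem statement2_general {C : Type u} [Category.{v} C] [HasFiniteProducts C]
    (X : C) (M : Mon Cᵒᵖ) (hX : M.X = Opposite.op X) :
    ∃ e : (Mod Cᵒᵖ M.X)ᵒᵖ ≌ Over X,
      ∀ N : (Mod Cᵒᵖ M.X)ᵒᵖ,
        e.functor.obj N =
          Over.mk (((ModObj.smul (M := M.X) (X := N.unop.X) : M.X ⊗ N.unop.X ⟶ N.unop.X).unop ≫ (coprod.inl : M.X ⟶ M.X ⊗ N.unop.X).unop) ≫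
            eqToHom (congrArg Opposite.unop hX)) := by
  obtain rfl : X = M.X.unop := by rw [hX]
  refine ⟨Mod.opEquivOver M.X, fun N => ?_⟩
  simp only [eqToHom_refl, Category.comp_id]
  rfl

/-- Let `C` be a category with finite products, with its Cartesian monoidal structure, and let
`X` be an object of `C` regarded as a comonoid via the diagonal comultiplication and the counit
to the terminal object; i.e. `M : Mon_ Cᵒᵖ` is `op X` with the codiagonal monoid structure in
`Cᵒᵖ` (equipped with its coCartesian monoidal structure).  Then the category of left
`X`-comodules, namely `(Mod_ M)ᵒᵖ`, is equivalent to the slice category `C/X`, via the functor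
sending a comodule with coaction `c : N ⟶ X × N` to `N` equipped with the composite of `c` with
the projection `X × N ⟶ X` (which, in `Cᵒᵖ`, is the coproduct inclusion). -/
theorem statement2 {C : Type u} [Category.{v} C] [HasFiniteProducts C]
    (X : C) (M : Mon Cᵒᵖ) (hX : M.X = Opposite.op X)
    (h_one : MonObj.one (X := M.X) = initial.to M.X) (h_mul : MonObj.mul (X := M.X) = codiag M.X) :
    ∃ e : (Mod Cᵒᵖ M.X)ᵒᵖ ≌ Over X,
      ∀ N : (Mod Cᵒᵖ M.X)ᵒᵖ,
        e.functor.obj N =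
          Over.mk (((ModObj.smul (M := M.X) (X := N.unop.X) : M.X ⊗ N.unop.X ⟶ N.unop.X).unop ≫ (coprod.inl : M.X ⟶ M.X ⊗ N.unop.X).unop) ≫
            eqToHom (congrArg Opposite.unop hX)) :=
  statement2_general X M hX
end

section
/- Let C be a category with finite coproducts, equipped with its coCartesian monoidal structure, and let a and b be objects of C, each regarded as a monoid object via the codiagonal multiplication and the unit from the initial object. Then the category of (a, b)-bimodule objects in C is equivalent to the coslice category (a ⨿ b)/C of objects of C under the coproduct a ⨿ b; equivalently, it is equivalent to the category of cospans a → M ← b in C. The equivalence sends a bimodule M with left action l : a ⨿ M → M and right action r : M ⨿ b → M to the cospan whose legs are the composites a → a ⨿ M → M and b → M ⨿ b → M of the coproduct inclusions with the two actions. -/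
open CategoryTheory CategoryTheory.Limits CategoryTheory.MonoidalCategory

attribute [local instance] CategoryTheory.monoidalOfHasFiniteCoproducts

universe v u

/-!
For the coproduct tensor product, the unit laws of a monoid `m : a ⨿ a ⟶ a` say that both
restrictions of `m` are the identity, so `m` is the codiagonal. Likewise the unit law of a left
action `l : a ⨿ n ⟶ n` makes its restriction to `n` the identity, so `l` is determined by its
restriction `a ⟶ n`. Conversely, any map `a ⟶ n` extended by the identity on `n` is an action:
checked summand by summand, the associativity conditions hold because the multiplications are
codiagonals. Hence an `(a, b)`-bimodule is the same as a cospan `a ⟶ n ⟵ b`.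
-/

namespace CategoryTheory.monoidalOfHasFiniteCoproducts

variable {C : Type u} [Category.{v} C] [HasFiniteCoproducts C]

theorem Mon.mul_eq_codiag (M : Mon C) : M.mon.mul = codiag M.X := by
  apply coprod.hom_ext
  · have h := coprod.inl ≫= MonObj.mul_one M.X
    simp only [whiskerLeft, coprod.inl_map_assoc, Category.id_comp] at h
    exact h.trans ((coprod.inl_desc _ _).trans (coprod.inl_desc _ _).symm)
  · have h := coprod.inr ≫= MonObj.one_mul M.X
    simp only [whiskerRight, coprod.inr_map_assoc, Category.id_comp] at h
    exact h.trans ((coprod.inr_desc _ _).trans (coprod.inr_desc _ _).symm)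

variable {A B : Mon C}

theorem Bimod.inr_actLeft (N : Bimod A B) :
    (coprod.inr : N.X ⟶ A.X ⊗ N.X) ≫ N.actLeft = 𝟙 N.X := by
  have h := coprod.inr ≫= N.one_actLeft
  simp only [whiskerRight, coprod.inr_map_assoc, Category.id_comp] at h
  exact h.trans (coprod.inr_desc _ _)

theorem Bimod.inl_actRight (N : Bimod A B) :
    (coprod.inl : N.X ⟶ N.X ⊗ B.X) ≫ N.actRight = 𝟙 N.X := by
  have h := coprod.inl ≫= N.actRight_one
  simp only [whiskerLeft, coprod.inl_map_assoc, Category.id_comp] at h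
  exact h.trans (coprod.inl_desc _ _)

-- `coprod.inl_desc` and `coprod.inr_desc` are passed to `simp` explicitly below: the simp set
-- does not match them on composites typed through `⊗` and `𝟙_ C`.
noncomputable def Bimod.ofUnderCoprodObj (U : Under (A.X ⨿ B.X)) : Bimod A B where
  X := U.right
  actLeft := coprod.desc (coprod.inl ≫ U.hom) (𝟙 U.right)
  actRight := coprod.desc (𝟙 U.right) (coprod.inr ≫ U.hom)
  one_actLeft := coprod.hom_ext (initial.hom_ext _ _) (by simp [coprod.inr_desc])
  actRight_one := coprod.hom_ext (by simp [coprod.inl_desc]) (initial.hom_ext _ _)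
  left_assoc := by
    apply coprod.hom_ext
    · apply coprod.hom_ext <;>
        simp [Mon.mul_eq_codiag, associator_hom, coprod.inl_desc, coprod.inr_desc]
    · simp [Mon.mul_eq_codiag, associator_hom, coprod.inl_desc, coprod.inr_desc]
  right_assoc := by
    apply coprod.hom_ext
    · simp [Mon.mul_eq_codiag, associator_inv, coprod.inl_desc, coprod.inr_desc]
    · apply coprod.hom_ext <;>
        simp [Mon.mul_eq_codiag, associator_inv, coprod.inl_desc, coprod.inr_desc]
  middle_assoc := by
    apply coprod.hom_ext
    · apply coprod.hom_ext <;> simp [associator_hom, coprod.inl_desc, coprod.inr_desc]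
    · simp [associator_hom, coprod.inl_desc, coprod.inr_desc]

variable (A B)

noncomputable def Bimod.toUnderCoprod : Bimod A B ⥤ Under (A.X ⨿ B.X) where
  obj N := Under.mk (coprod.desc
      ((coprod.inl : A.X ⟶ A.X ⊗ N.X) ≫ N.actLeft)
      ((coprod.inr : B.X ⟶ N.X ⊗ B.X) ≫ N.actRight))
  map f := Under.homMk f.hom (by apply coprod.hom_ext <;> simp)

noncomputable def Bimod.ofUnderCoprod : Under (A.X ⨿ B.X) ⥤ Bimod A B where
  obj := Bimod.ofUnderCoprodObj
  map f :=
    { hom := f.right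
      left_act_hom := by apply coprod.hom_ext <;> simp [Bimod.ofUnderCoprodObj]
      right_act_hom := by apply coprod.hom_ext <;> simp [Bimod.ofUnderCoprodObj] }

noncomputable def Bimod.equivUnderCoprod : Bimod A B ≌ Under (A.X ⨿ B.X) :=
  .mk (Bimod.toUnderCoprod A B) (Bimod.ofUnderCoprod A B)
    (NatIso.ofComponents
      (fun N => Bimod.isoOfIso (Iso.refl N.X)
        (by
          apply coprod.hom_ext <;>
            simp [Bimod.toUnderCoprod, Bimod.ofUnderCoprod, Bimod.ofUnderCoprodObj,
              Bimod.inr_actLeft, coprod.inl_desc, coprod.inr_desc])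
        (by
          apply coprod.hom_ext <;>
            simp [Bimod.toUnderCoprod, Bimod.ofUnderCoprod, Bimod.ofUnderCoprodObj,
              Bimod.inl_actRight, coprod.inl_desc, coprod.inr_desc]))
      fun _ => by ext; exact (Category.comp_id _).trans (Category.id_comp _).symm)
    (NatIso.ofComponents
      (fun U => Under.isoMk (Iso.refl U.right)
        (by
          apply coprod.hom_ext <;>
            simp [Bimod.toUnderCoprod, Bimod.ofUnderCoprod, Bimod.ofUnderCoprodObj,
              coprod.inl_desc, coprod.inr_desc]))
      fun _ => by ext; exact (Category.comp_id _).trans (Category.id_comp _).symm)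

end CategoryTheory.monoidalOfHasFiniteCoproducts

theorem statement3_general {C : Type u} [Category.{v} C] [HasFiniteCoproducts C]
    (A B : Mon C) :
    ∃ e : Bimod A B ≌ Under (A.X ⨿ B.X),
      ∀ N : Bimod A B,
        e.functor.obj N =
          Under.mk (coprod.desc
            ((coprod.inl : A.X ⟶ A.X ⊗ N.X) ≫ N.actLeft)
            ((coprod.inr : B.X ⟶ N.X ⊗ B.X) ≫ N.actRight)) :=
  ⟨monoidalOfHasFiniteCoproducts.Bimod.equivUnderCoprod A B, fun _ => rfl⟩

/-- Let `C` be a category with finite coproducts with its coCartesian monoidal structure, and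
let `a` and `b` be objects of `C`, each regarded as a monoid object (`A` and `B`) via the
codiagonal multiplication and the unit from the initial object.  Then the category of
`(A, B)`-bimodule objects in `C` is equivalent to the coslice category `(a ⨿ b)/C`
(equivalently, the category of cospans `a ⟶ N ⟵ b`), via the functor sending a bimodule `N`
with left action `l` and right action `r` to the map out of `a ⨿ b` whose components are the
composites of the coproduct inclusions with the two actions. -/
theorem statement3 {C : Type u} [Category.{v} C] [HasFiniteCoproducts C]
    (A B : Mon C)
    (hA_one : A.mon.one = initial.to A.X) (hA_mul : A.mon.mul = codiag A.X)
    (hB_one : B.mon.one = initial.to B.X) (hB_mul : B.mon.mul = codiag B.X) :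
    ∃ e : Bimod A B ≌ Under (A.X ⨿ B.X),
      ∀ N : Bimod A B,
        e.functor.obj N =
          Under.mk (coprod.desc
            ((coprod.inl : A.X ⟶ A.X ⊗ N.X) ≫ N.actLeft)
            ((coprod.inr : B.X ⟶ N.X ⊗ B.X) ≫ N.actRight)) :=
  statement3_general A B
end
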